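/- arXiv:0907.0619 — 4 statements merged into one kernel-verified Lean document; each statement's English description precedes it below -/
import Mathlib

section
/- For any positive integer d and any real x > 0, if X_{d+1} is a chi-squared random variable with d+1 degrees of freedom and X_d is a chi-squared random variable with d degrees of freedom, then d·E[(X_{d+1} − x)_+] ≥ (d+1)·E[(X_d − x)_+], where (y)_+ = max(y,0). -/
open MeasureTheory ProbabilityTheory Real Set

/-!
Let `f_a` be the Gamma(a, r) density and `Φ = a f_b - b f_a` for `a < b`. Since
`f_b / f_a` is a multiple of `y ^ (b - a)`, `Φ` changes sign exactly once, from negative to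
positive, at some `t > 0`; and `∫ y Φ = a (b / r) - b (a / r) = 0` because the means are `b / r`
and `a / r`. The chord `c y` of the convex function `(y - x)₊` over `[0, t]` makes
`(y - x)₊ - c y` change sign at the same `t`, so `∫ (y - x)₊ Φ = ∫ ((y - x)₊ - c y) Φ ≥ 0`.
-/

/-- The chi-squared distribution with `k` degrees of freedom, as the
Gamma distribution with shape `k/2` and rate `1/2`. -/
noncomputable def chiSqMeasure (k : ℕ) : Measure ℝ :=
  gammaMeasure ((k : ℝ) / 2) (1 / 2)

section SignChange

variable {x t y : ℝ}

lemma posPart_sub_le_mul_of_le (hx : 0 ≤ x) (ht : 0 < t) (hy : 0 ≤ y) (hyt : y ≤ t) :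
    max (y - x) 0 ≤ max (t - x) 0 / t * y := by
  rw [div_mul_eq_mul_div, le_div_iff₀ ht]
  rcases le_total y x with hyx | hxy
  · rw [max_eq_right (by linarith), zero_mul]; positivity
  · rw [max_eq_left (by linarith), max_eq_left (by linarith)]
    nlinarith

lemma mul_le_posPart_sub_of_le (hx : 0 ≤ x) (ht : 0 < t) (hty : t ≤ y) :
    max (t - x) 0 / t * y ≤ max (y - x) 0 := by
  rw [div_mul_eq_mul_div, div_le_iff₀ ht]
  rcases le_total t x with htx | hxt
  · rw [max_eq_right (by linarith), zero_mul]; positivity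
  · rw [max_eq_left (by linarith), max_eq_left (by linarith)]
    nlinarith

lemma integrable_posPart_sub_mul {f : ℝ → ℝ} (hx : 0 ≤ x) (hf : AEStronglyMeasurable f)
    (hyf : Integrable fun y => y * f y) : Integrable fun y => max (y - x) 0 * f y := by
  refine hyf.mono (by fun_prop) (.of_forall fun y => ?_)
  rw [norm_mul, norm_mul]
  gcongr
  rw [Real.norm_of_nonneg (le_max_right _ _), Real.norm_eq_abs]
  exact max_le (by linarith [le_abs_self y]) (abs_nonneg y)

theorem integral_posPart_sub_mul_nonneg_of_sign_change {Φ : ℝ → ℝ} (hx : 0 ≤ x) (ht : 0 < t)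
    (hΦ : AEStronglyMeasurable Φ) (hyΦ : Integrable fun y => y * Φ y)
    (h_moment : ∫ y, y * Φ y = 0) (h_neg : ∀ y < 0, Φ y = 0)
    (h_le : ∀ y, 0 < y → y ≤ t → Φ y ≤ 0) (h_ge : ∀ y, t ≤ y → 0 ≤ Φ y) :
    0 ≤ ∫ y, max (y - x) 0 * Φ y := by
  set c := max (t - x) 0 / t
  have h_pointwise : ∀ y, 0 ≤ (max (y - x) 0 - c * y) * Φ y := by
    intro y
    rcases le_total t y with hty | hyt
    · exact mul_nonneg (sub_nonneg.2 (mul_le_posPart_sub_of_le hx ht hty)) (h_ge y hty)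
    rcases lt_trichotomy y 0 with hy | rfl | hy
    · simp [h_neg y hy]
    · simp [hx]
    · exact mul_nonneg_of_nonpos_of_nonpos
        (sub_nonpos.2 (posPart_sub_le_mul_of_le hx ht hy.le hyt)) (h_le y hy hyt)
  calc 0 ≤ ∫ y, (max (y - x) 0 - c * y) * Φ y := integral_nonneg h_pointwise
    _ = (∫ y, max (y - x) 0 * Φ y) - c * ∫ y, y * Φ y := by
      simp only [sub_mul, mul_assoc]
      rw [integral_sub (integrable_posPart_sub_mul hx hΦ hyΦ) (hyΦ.const_mul c), integral_const_mul]
    _ = ∫ y, max (y - x) 0 * Φ y := by rw [h_moment, mul_zero, sub_zero]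

end SignChange

section GammaDensity

variable {a b r : ℝ}

lemma toReal_gammaPDF (ha : 0 < a) (hr : 0 < r) (y : ℝ) :
    (gammaPDF a r y).toReal = gammaPDFReal a r y :=
  ENNReal.toReal_ofReal (gammaPDFReal_nonneg ha hr y)

lemma measurable_gammaPDF (a r : ℝ) : Measurable (gammaPDF a r) :=
  (measurable_gammaPDFReal a r).ennreal_ofReal

lemma integrable_gammaPDFReal (ha : 0 < a) (hr : 0 < r) : Integrable (gammaPDFReal a r) := by
  refine (integrable_toReal_of_lintegral_ne_top (measurable_gammaPDF a r).aemeasurable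
    (by rw [lintegral_gammaPDF_eq_one ha hr]; exact ENNReal.one_ne_top)).congr
    (.of_forall (toReal_gammaPDF ha hr))

lemma integral_gammaPDFReal (ha : 0 < a) (hr : 0 < r) : ∫ y, gammaPDFReal a r y = 1 := by
  simp_rw [← toReal_gammaPDF ha hr]
  rw [integral_toReal (measurable_gammaPDF a r).aemeasurable
      (.of_forall fun _ => ENNReal.ofReal_lt_top),
    lintegral_gammaPDF_eq_one ha hr, ENNReal.toReal_one]

lemma integral_gammaMeasure (ha : 0 < a) (hr : 0 < r) (g : ℝ → ℝ) :
    ∫ y, g y ∂gammaMeasure a r = ∫ y, g y * gammaPDFReal a r y := by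
  rw [gammaMeasure, integral_withDensity_eq_integral_toReal_smul (measurable_gammaPDF a r)
    (.of_forall fun _ => ENNReal.ofReal_lt_top)]
  simp_rw [toReal_gammaPDF ha hr, smul_eq_mul, mul_comm]

lemma gammaPDFReal_eq_mul_rpow_mul (ha : 0 < a) (hr : 0 < r) {y : ℝ} (hy : 0 < y) :
    gammaPDFReal b r y = r ^ (b - a) * Gamma a / Gamma b * y ^ (b - a) * gammaPDFReal a r y := by
  have hΓ := (Gamma_pos_of_pos ha).ne'
  simp only [gammaPDFReal, if_pos hy.le]
  rw [show b - 1 = (b - a) + (a - 1) by ring, rpow_add hy, rpow_sub hr]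
  field_simp

lemma mul_gammaPDFReal (ha : 0 < a) (hr : 0 < r) (y : ℝ) :
    y * gammaPDFReal a r y = a / r * gammaPDFReal (a + 1) r y := by
  unfold gammaPDFReal
  split_ifs with hy
  · rw [Gamma_add_one ha.ne', rpow_add_one hr.ne', add_sub_cancel_right]
    rcases hy.eq_or_lt with rfl | hy
    · simp [zero_rpow ha.ne']
    · rw [rpow_sub_one hy.ne']
      field_simp
  · simp

lemma integrable_mul_gammaPDFReal (ha : 0 < a) (hr : 0 < r) :
    Integrable fun y => y * gammaPDFReal a r y := by
  simp_rw [mul_gammaPDFReal ha hr]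
  exact (integrable_gammaPDFReal (by linarith) hr).const_mul _

lemma integral_mul_gammaPDFReal (ha : 0 < a) (hr : 0 < r) :
    ∫ y, y * gammaPDFReal a r y = a / r := by
  simp_rw [mul_gammaPDFReal ha hr]
  rw [integral_const_mul, integral_gammaPDFReal (by linarith) hr, mul_one]

lemma exists_single_crossing_gammaPDFReal_sub (ha : 0 < a) (hab : a < b) (hr : 0 < r)
    {α β : ℝ} (hα : 0 < α) (hβ : 0 < β) :
    ∃ t > 0, (∀ y, 0 < y → y ≤ t → α * gammaPDFReal b r y - β * gammaPDFReal a r y ≤ 0) ∧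
      ∀ y, t ≤ y → 0 ≤ α * gammaPDFReal b r y - β * gammaPDFReal a r y := by
  have hδ : 0 < b - a := sub_pos.2 hab
  have hK : 0 < r ^ (b - a) * Gamma a / Gamma b := by
    have := Gamma_pos_of_pos ha
    have := Gamma_pos_of_pos (ha.trans hab)
    positivity
  set K := r ^ (b - a) * Gamma a / Gamma b
  have h_factor : ∀ y, 0 < y → α * gammaPDFReal b r y - β * gammaPDFReal a r y
      = (α * K * y ^ (b - a) - β) * gammaPDFReal a r y := by
    intro y hy
    rw [gammaPDFReal_eq_mul_rpow_mul ha hr hy]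
    ring
  set t := (β / (α * K)) ^ (b - a)⁻¹
  have ht : t ^ (b - a) = β / (α * K) := rpow_inv_rpow (by positivity) hδ.ne'
  have ht_pos : 0 < t := by positivity
  refine ⟨t, ht_pos, fun y hy hyt => ?_, fun y hty => ?_⟩
  · have hyδ : y ^ (b - a) ≤ β / (α * K) := ht ▸ rpow_le_rpow hy.le hyt hδ.le
    rw [le_div_iff₀ (by positivity)] at hyδ
    rw [h_factor y hy]
    exact mul_nonpos_of_nonpos_of_nonneg (by linarith) (gammaPDFReal_nonneg ha hr y)
  · have hy : 0 < y := ht_pos.trans_le hty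
    have hyδ : β / (α * K) ≤ y ^ (b - a) := ht ▸ rpow_le_rpow ht_pos.le hty hδ.le
    rw [div_le_iff₀ (by positivity)] at hyδ
    rw [h_factor y hy]
    exact mul_nonneg (by linarith) (gammaPDFReal_nonneg ha hr y)

theorem mul_integral_posPart_sub_gammaMeasure_le {x : ℝ} (ha : 0 < a) (hab : a < b) (hr : 0 < r)
    (hx : 0 ≤ x) :
    b * ∫ y, max (y - x) 0 ∂gammaMeasure a r ≤ a * ∫ y, max (y - x) 0 ∂gammaMeasure b r := by
  have hb : 0 < b := ha.trans hab
  set Φ := fun y => a * gammaPDFReal b r y - b * gammaPDFReal a r y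
  have h_integral : ∀ g : ℝ → ℝ, Integrable (fun y => g y * gammaPDFReal a r y) →
      Integrable (fun y => g y * gammaPDFReal b r y) →
      ∫ y, g y * Φ y = a * (∫ y, g y * gammaPDFReal b r y) - b * ∫ y, g y * gammaPDFReal a r y := by
    intro g hga hgb
    simp only [Φ, mul_sub, mul_left_comm (g _)]
    rw [integral_sub (hgb.const_mul a) (hga.const_mul b), integral_const_mul, integral_const_mul]
  have hya := integrable_mul_gammaPDFReal ha hr
  have hyb := integrable_mul_gammaPDFReal hb hr
  have hyΦ : Integrable fun y => y * Φ y :=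
    ((hyb.const_mul a).sub (hya.const_mul b)).congr
      (.of_forall fun y => by simp only [Φ, Pi.sub_apply]; ring)
  have h_moment : ∫ y, y * Φ y = 0 := by
    rw [h_integral _ hya hyb, integral_mul_gammaPDFReal ha hr, integral_mul_gammaPDFReal hb hr]
    ring
  have h_neg : ∀ y < 0, Φ y = 0 := fun y hy => by simp [Φ, gammaPDFReal, hy.not_ge]
  obtain ⟨t, ht, h_le, h_ge⟩ := exists_single_crossing_gammaPDFReal_sub ha hab hr ha hb
  have key := integral_posPart_sub_mul_nonneg_of_sign_change hx ht (by fun_prop) hyΦ h_moment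
    h_neg h_le h_ge
  rw [h_integral _ (integrable_posPart_sub_mul hx (by fun_prop) hya)
    (integrable_posPart_sub_mul hx (by fun_prop) hyb)] at key
  rw [integral_gammaMeasure ha hr, integral_gammaMeasure hb hr]
  linarith

end GammaDensity

theorem chiSq_pos_part_mono_deg (d : ℕ) (hd : 0 < d) (x : ℝ) (hx : 0 < x) :
    (d : ℝ) * ∫ y, max (y - x) 0 ∂(chiSqMeasure (d + 1)) ≥
      ((d : ℝ) + 1) * ∫ y, max (y - x) 0 ∂(chiSqMeasure d) := by
  have hd' : (0 : ℝ) < d := Nat.cast_pos.2 hd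
  have h := mul_integral_posPart_sub_gammaMeasure_le (r := 1 / 2) (half_pos hd')
    (by linarith : (d : ℝ) / 2 < ((d : ℝ) + 1) / 2) one_half_pos hx.le
  rw [chiSqMeasure, chiSqMeasure, Nat.cast_succ]
  linarith
end

section
/- Let Z_1, …, Z_{N+1} be nonnegative real numbers, Y = Z_1 + ⋯ + Z_{N+1}, and for each i let Y^{(i)} = Y − Z_i. Then for any real x ≥ 0, Σ_{i=1}^{N+1} (Y^{(i)} − N·x)_+ ≥ N·(Y − (N+1)·x)_+. -/
/-!
The numbers `Y - Z i - N x` add up to `N (Y - (N + 1) x)`, so the inequality is just the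
subadditivity of the positive part.
-/

open Finset

theorem max_sum_zero_le_sum_max_zero {ι α : Type*} [AddCommMonoid α] [LinearOrder α]
    [IsOrderedAddMonoid α] (s : Finset ι) (f : ι → α) :
    max (∑ i ∈ s, f i) 0 ≤ ∑ i ∈ s, max (f i) 0 :=
  max_le (sum_le_sum fun _ _ => le_max_left _ _) (sum_nonneg fun _ _ => le_max_right _ _)

theorem sum_sum_sub_self_sub {ι : Type*} (s : Finset ι) (Z : ι → ℝ) (c : ℝ) :
    ∑ i ∈ s, (∑ j ∈ s, Z j - Z i - c) = (#s - 1 : ℝ) * ∑ j ∈ s, Z j - #s * c := by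
  simp only [sum_sub_distrib, sum_const, nsmul_eq_mul]
  ring

theorem pointwise_pos_part_sum_ineq'_general (N : ℕ) (Z : Fin (N + 1) → ℝ) (x : ℝ) :
    ∑ i, max ((∑ j, Z j) - Z i - (N : ℝ) * x) 0 ≥
      (N : ℝ) * max ((∑ i, Z i) - ((N : ℝ) + 1) * x) 0 := by
  have sum_leave_one_out :
      ∑ i, ((∑ j, Z j) - Z i - (N : ℝ) * x) = (N : ℝ) * ((∑ i, Z i) - ((N : ℝ) + 1) * x) := by
    rw [sum_sum_sub_self_sub, card_univ, Fintype.card_fin]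
    push_cast
    ring
  calc (N : ℝ) * max ((∑ i, Z i) - ((N : ℝ) + 1) * x) 0
      = max (∑ i, ((∑ j, Z j) - Z i - (N : ℝ) * x)) 0 := by
        rw [sum_leave_one_out, mul_max_of_nonneg _ _ N.cast_nonneg, mul_zero]
    _ ≤ ∑ i, max ((∑ j, Z j) - Z i - (N : ℝ) * x) 0 := max_sum_zero_le_sum_max_zero _ _

theorem pointwise_pos_part_sum_ineq' (N : ℕ) (Z : Fin (N + 1) → ℝ)
    (hZ : ∀ i, 0 ≤ Z i) (x : ℝ) (hx : 0 ≤ x) :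
    ∑ i, max ((∑ j, Z j) - Z i - (N : ℝ) * x) 0 ≥
      (N : ℝ) * max ((∑ i, Z i) - ((N : ℝ) + 1) * x) 0 :=
  pointwise_pos_part_sum_ineq'_general N Z x
end

section
/- Define DKhi(d, N, x) = P(F_{d+2,N} ≥ x/(d+2)) − (x/d)·P(F_{d,N+2} ≥ (N+2)x/(N·d)) for positive integers d, N and x > 0, where F_{a,b} denotes a Fisher random variable with a and b degrees of freedom. Then d·DKhi(d,N,x) = E[(X_d − x·X'_N/N)_+], where X_d and X'_N are independent chi-squared random variables with d and N degrees of freedom. -/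
/-!
Multiplying the chi-squared law with `k` degrees of freedom by its variable gives `k` times the
law with `k + 2` degrees of freedom, since `k f_{k+2}(u) = u f_k(u)` for the densities. Up to the
null set `{X' ≤ 0}` both Fisher events equal `T = {X ≥ (x/N) X'}`, so this size-biasing, applied
in the first and in the second coordinate, gives `d P_{d+2,N}(T) = E[X; T]` and
`x P_{d,N+2}(T) = E[(x/N) X'; T]`; their difference is `E[(X - (x/N) X')₊]`.
-/

open MeasureTheory ProbabilityTheory Real

open scoped ENNReal

lemma ofReal_div_mul_gammaPDF_add_one {a r : ℝ} (ha : 0 < a) (hr : 0 < r) (x : ℝ) :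
    ENNReal.ofReal (a / r) * gammaPDF (a + 1) r x = ENNReal.ofReal x * gammaPDF a r x := by
  rcases lt_or_ge x 0 with hx | hx
  · simp [gammaPDF_of_neg hx]
  rw [gammaPDF_of_nonneg hx, gammaPDF_of_nonneg hx, ← ENNReal.ofReal_mul (by positivity),
    ← ENNReal.ofReal_mul hx, Gamma_add_one ha.ne', rpow_add hr, rpow_one, add_sub_cancel_right,
    ← sub_add_cancel a 1, rpow_add_one' hx (by simpa using ha.ne'), sub_add_cancel]
  have := (Gamma_pos_of_pos ha).ne'
  congr 1
  field_simp

lemma gammaMeasure_withDensity_ofReal {a r : ℝ} (ha : 0 < a) (hr : 0 < r) :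
    (gammaMeasure a r).withDensity ENNReal.ofReal =
      ENNReal.ofReal (a / r) • gammaMeasure (a + 1) r := by
  have hpdf (b : ℝ) : Measurable (gammaPDF b r) := (measurable_gammaPDFReal b r).ennreal_ofReal
  rw [gammaMeasure, gammaMeasure, ← withDensity_mul _ (hpdf a) ENNReal.measurable_ofReal,
    ← withDensity_smul _ (hpdf (a + 1))]
  congr 1
  ext x
  exact (mul_comm _ _).trans (ofReal_div_mul_gammaPDF_add_one ha hr x).symm

lemma ae_pos_gammaMeasure (a r : ℝ) : ∀ᵐ x ∂gammaMeasure a r, 0 < x := by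
  rw [gammaMeasure,
    ae_withDensity_iff (f := gammaPDF a r) (measurable_gammaPDFReal a r).ennreal_ofReal]
  filter_upwards [Measure.ae_ne volume 0] with x hx0 hpdf
  exact hx0.symm.lt_of_le (not_lt.mp fun hx => hpdf (gammaPDF_of_neg hx))

instance (k : ℕ) : SFinite (chiSqMeasure k) :=
  inferInstanceAs (SFinite (volume.withDensity _))

lemma isProbabilityMeasure_chiSqMeasure {k : ℕ} (hk : 0 < k) :
    IsProbabilityMeasure (chiSqMeasure k) :=
  isProbabilityMeasure_gammaMeasure (by positivity) (by norm_num)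

lemma chiSqMeasure_withDensity_ofReal {k : ℕ} (hk : 0 < k) :
    (chiSqMeasure k).withDensity ENNReal.ofReal = (k : ℝ≥0∞) • chiSqMeasure (k + 2) := by
  rw [chiSqMeasure, gammaMeasure_withDensity_ofReal (by positivity) (by norm_num), chiSqMeasure,
    show ((k + 2 : ℕ) : ℝ) / 2 = k / 2 + 1 by push_cast; ring,
    show (k : ℝ) / 2 / (1 / 2) = k by ring, ENNReal.ofReal_natCast]

lemma ae_pos_chiSqMeasure (k : ℕ) : ∀ᵐ x ∂chiSqMeasure k, 0 < x :=
  ae_pos_gammaMeasure _ _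

lemma setLIntegral_ofReal_fst_chiSqMeasure_prod {k : ℕ} (hk : 0 < k) (ν : Measure ℝ) [SFinite ν]
    {s : Set (ℝ × ℝ)} (hs : MeasurableSet s) :
    ∫⁻ q in s, ENNReal.ofReal q.1 ∂(chiSqMeasure k).prod ν =
      k * (chiSqMeasure (k + 2)).prod ν s := by
  rw [← withDensity_apply _ hs, ← prod_withDensity_left ENNReal.measurable_ofReal,
    chiSqMeasure_withDensity_ofReal hk, Measure.prod_smul_left, Measure.smul_apply, smul_eq_mul]

lemma setLIntegral_ofReal_snd_prod_chiSqMeasure {k : ℕ} (hk : 0 < k) (μ : Measure ℝ) [SFinite μ]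
    {s : Set (ℝ × ℝ)} (hs : MeasurableSet s) :
    ∫⁻ q in s, ENNReal.ofReal q.2 ∂μ.prod (chiSqMeasure k) =
      k * μ.prod (chiSqMeasure (k + 2)) s := by
  rw [← withDensity_apply _ hs, ← prod_withDensity_right ENNReal.measurable_ofReal,
    chiSqMeasure_withDensity_ofReal hk, Measure.prod_smul_right, Measure.smul_apply, smul_eq_mul]

lemma setOf_fisher_ge_ae_eq {μ ν : Measure ℝ} [SFinite ν] (hν : ∀ᵐ v ∂ν, 0 < v) {a b : ℝ}
    (ha : 0 < a) (hb : 0 < b) (c : ℝ) :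
    {q : ℝ × ℝ | (q.1 / a) / (q.2 / b) ≥ c} =ᵐ[μ.prod ν] {q | c * a / b * q.2 ≤ q.1} := by
  refine Filter.eventuallyEq_set.mpr ?_
  filter_upwards [Measure.quasiMeasurePreserving_snd.ae hν] with q hq
  rw [ge_iff_le, le_div_iff₀ (div_pos hq hb), le_div_iff₀ ha,
    show c * (q.2 / b) * a = c * a / b * q.2 by ring]

lemma setLIntegral_ofReal_eq_lintegral_ofReal_sub_add {α : Type*} [MeasurableSpace α]
    {μ : Measure α} {f g : α → ℝ} (hf : Measurable f) (hg : Measurable g) (hg0 : 0 ≤ᵐ[μ] g) :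
    ∫⁻ a in {a | g a ≤ f a}, ENNReal.ofReal (f a) ∂μ =
      ∫⁻ a, ENNReal.ofReal (f a - g a) ∂μ + ∫⁻ a in {a | g a ≤ f a}, ENNReal.ofReal (g a) ∂μ := by
  have hT : MeasurableSet {a | g a ≤ f a} := measurableSet_le hg hf
  have hsupp : Function.support (fun a => ENNReal.ofReal (f a - g a)) ⊆ {a | g a ≤ f a} :=
    fun a ha => by simpa using (ENNReal.ofReal_pos.mp (pos_iff_ne_zero.mpr ha)).le
  rw [← setLIntegral_eq_of_support_subset hsupp,
    ← lintegral_add_left (f := fun a => ENNReal.ofReal (f a - g a))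
      (hf.sub hg).ennreal_ofReal]
  refine setLIntegral_congr_fun_ae hT ?_
  filter_upwards [hg0] with a ha hle
  rw [← ENNReal.ofReal_add (sub_nonneg.mpr hle) ha, sub_add_cancel]

lemma natCast_mul_chiSqMeasure_prod_setOf_le {d N : ℕ} (hd : 0 < d) (hN : 0 < N) {s : ℝ}
    (hs : 0 ≤ s) :
    (d : ℝ≥0∞) * (chiSqMeasure (d + 2)).prod (chiSqMeasure N) {q | s * q.2 ≤ q.1} =
      ∫⁻ q, ENNReal.ofReal (q.1 - s * q.2) ∂(chiSqMeasure d).prod (chiSqMeasure N) +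
        ENNReal.ofReal (s * N) *
          (chiSqMeasure d).prod (chiSqMeasure (N + 2)) {q | s * q.2 ≤ q.1} := by
  have hT : MeasurableSet {q : ℝ × ℝ | s * q.2 ≤ q.1} :=
    measurableSet_le (measurable_snd.const_mul s) measurable_fst
  have hsv : 0 ≤ᵐ[(chiSqMeasure d).prod (chiSqMeasure N)] fun q => s * q.2 := by
    filter_upwards [Measure.quasiMeasurePreserving_snd.ae (ae_pos_chiSqMeasure N)] with q hq
    exact mul_nonneg hs hq.le
  rw [← setLIntegral_ofReal_fst_chiSqMeasure_prod hd _ hT,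
    setLIntegral_ofReal_eq_lintegral_ofReal_sub_add measurable_fst
      (measurable_snd.const_mul s) hsv]
  simp_rw [ENNReal.ofReal_mul hs]
  rw [lintegral_const_mul _ measurable_snd.ennreal_ofReal,
    setLIntegral_ofReal_snd_prod_chiSqMeasure hN _ hT, ENNReal.ofReal_natCast, mul_assoc]

lemma integral_max_zero_eq_toReal_lintegral {α : Type*} [MeasurableSpace α] {μ : Measure α}
    {f : α → ℝ} (hf : AEStronglyMeasurable f μ) :
    ∫ a, max (f a) 0 ∂μ = (∫⁻ a, ENNReal.ofReal (f a) ∂μ).toReal := by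
  rw [integral_eq_lintegral_of_nonneg_ae (f := fun a => max (f a) 0)
    (ae_of_all _ fun a => le_max_right _ _) (hf.sup aestronglyMeasurable_const)]
  simp_rw [ENNReal.ofReal_max, ENNReal.ofReal_zero, max_zero]

theorem DKhi_eq_expectation (d N : ℕ) (hd : 0 < d) (hN : 0 < N) (x : ℝ) (hx : 0 < x) :
    (d : ℝ) *
      ((((chiSqMeasure (d + 2)).prod (chiSqMeasure N))
          {q : ℝ × ℝ | (q.1 / ((d : ℝ) + 2)) / (q.2 / N) ≥ x / ((d : ℝ) + 2)}).toReal -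
        x / d *
          (((chiSqMeasure d).prod (chiSqMeasure (N + 2)))
            {q : ℝ × ℝ | (q.1 / d) / (q.2 / ((N : ℝ) + 2)) ≥
              ((N : ℝ) + 2) * x / ((N : ℝ) * d)}).toReal) =
    ∫ q : ℝ × ℝ, max (q.1 - x * q.2 / N) 0
      ∂((chiSqMeasure d).prod (chiSqMeasure N)) := by
  have hd' : (0 : ℝ) < d := Nat.cast_pos.mpr hd
  have hN' : (0 : ℝ) < N := Nat.cast_pos.mpr hN
  have := isProbabilityMeasure_chiSqMeasure (Nat.add_pos_left hd 2)
  have := isProbabilityMeasure_chiSqMeasure hN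
  rw [measure_congr (setOf_fisher_ge_ae_eq (ae_pos_chiSqMeasure N) (by positivity) hN' _),
    measure_congr (setOf_fisher_ge_ae_eq (ae_pos_chiSqMeasure (N + 2)) hd' (by positivity) _),
    show x / ((d : ℝ) + 2) * ((d : ℝ) + 2) / N = x / N by field_simp,
    show ((N : ℝ) + 2) * x / ((N : ℝ) * d) * d / ((N : ℝ) + 2) = x / N by field_simp,
    integral_max_zero_eq_toReal_lintegral (by fun_prop)]
  simp_rw [mul_div_right_comm x]
  have key := natCast_mul_chiSqMeasure_prod_setOf_le hd hN (div_nonneg hx.le hN'.le)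
  rw [div_mul_cancel₀ x hN'.ne'] at key
  have hfin : (d : ℝ≥0∞) * (chiSqMeasure (d + 2)).prod (chiSqMeasure N) {q | x / N * q.2 ≤ q.1}
      ≠ ⊤ := ENNReal.mul_ne_top (ENNReal.natCast_ne_top d) (measure_ne_top _ _)
  obtain ⟨hE, hB⟩ := ENNReal.add_ne_top.mp (key ▸ hfin)
  have hreal := congrArg ENNReal.toReal key
  rw [ENNReal.toReal_mul, ENNReal.toReal_add hE hB, ENNReal.toReal_mul,
    ENNReal.toReal_ofReal hx.le, ENNReal.toReal_natCast] at hreal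
  rw [mul_sub, ← mul_assoc, mul_div_cancel₀ x hd'.ne']
  linarith
end

section
/- Let d, N be positive integers with d ≥ 2 and define EDKhi(d, N, ·) as the inverse of the strictly decreasing function x ↦ DKhi(d,N,x) = (1/d)E[(X_d − x·X'_N/N)_+] (with X_d, X'_N independent chi-squared with d and N degrees of freedom). Then for any L ≥ 0, EDKhi(d, N, e^{−L}) ≥ 2L − 2·log(d). -/
/-!
For `X ~ Γ(a, r)` with `a ≥ 1` and `c ≥ 0`, the identity `x · p_a(x) = (a / r) · p_{a+1}(x)`
between gamma densities, together with `e^{-rc} p_a(y - c) ≤ p_a(y)`, gives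
`E[(X - c)₊] ≥ (a / r) e^{-rc}`. Conditioning on `Y ~ Γ(b, r')` and using the Laplace transform
`E[e^{-sY}] = (1 + s / r')^{-b} ≥ e^{-bs/r'}` then yields `E[(X - κY)₊] ≥ (a / r) e^{-rκb/r'}`.
For `X = X_d`, `Y = X'_N`, `κ = x / N` this reads `d e^{-L} = E[(X_d - x X'_N / N)₊] ≥ d e^{-x/2}`,
so `x ≥ 2L`, and `log d ≥ 0`.
-/

open MeasureTheory ProbabilityTheory Real

namespace ProbabilityTheory

variable {a r : ℝ}

instance (a r : ℝ) : SFinite (gammaMeasure a r) := by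
  unfold gammaMeasure
  infer_instance

lemma measurable_gammaPDF (a r : ℝ) : Measurable (gammaPDF a r) :=
  (measurable_gammaPDFReal a r).ennreal_ofReal

lemma ae_nonneg_gammaMeasure (a r : ℝ) : ∀ᵐ x ∂gammaMeasure a r, 0 ≤ x := by
  simp only [ae_iff, not_le]
  exact (withDensity_apply _ measurableSet_Iio).trans (lintegral_gammaPDF_of_nonpos le_rfl)

lemma gammaPDFReal_mul_exp_neg_mul {s : ℝ} (hr : 0 < r) (hs : 0 ≤ s) (x : ℝ) :
    gammaPDFReal a r x * exp (-(s * x)) = (r / (r + s)) ^ a * gammaPDFReal a (r + s) x := by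
  unfold gammaPDFReal
  split_ifs
  · have hrs : 0 < r + s := by linarith
    rw [div_rpow hr.le hrs.le, show -((r + s) * x) = -(r * x) + -(s * x) by ring, exp_add]
    field_simp
  · simp

lemma lintegral_exp_neg_mul_gammaMeasure {s : ℝ} (ha : 0 < a) (hr : 0 < r) (hs : 0 ≤ s) :
    ∫⁻ x, ENNReal.ofReal (exp (-(s * x))) ∂gammaMeasure a r
      = ENNReal.ofReal ((r / (r + s)) ^ a) := by
  have hrs : 0 < r + s := by linarith
  calc ∫⁻ x, ENNReal.ofReal (exp (-(s * x))) ∂gammaMeasure a r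
      = ∫⁻ x, ENNReal.ofReal ((r / (r + s)) ^ a) * gammaPDF a (r + s) x := by
        rw [gammaMeasure, lintegral_withDensity_eq_lintegral_mul _ (measurable_gammaPDF a r)
          (by fun_prop)]
        refine lintegral_congr fun x ↦ ?_
        simp only [Pi.mul_apply, gammaPDF]
        rw [← ENNReal.ofReal_mul (gammaPDFReal_nonneg ha hr x),
          gammaPDFReal_mul_exp_neg_mul hr hs, ENNReal.ofReal_mul (by positivity)]
    _ = ENNReal.ofReal ((r / (r + s)) ^ a) := by
        rw [lintegral_const_mul _ (measurable_gammaPDF a (r + s)),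
          lintegral_gammaPDF_eq_one ha hrs, mul_one]

lemma exp_neg_mul_div_le_div_add_rpow {s : ℝ} (ha : 0 ≤ a) (hr : 0 < r) (hs : 0 ≤ s) :
    exp (-(a * s / r)) ≤ (r / (r + s)) ^ a := by
  have h : r / (r + s) = (1 + s / r)⁻¹ := by field_simp
  rw [h, inv_rpow (by positivity), exp_neg, mul_div_assoc, mul_comm, exp_mul]
  gcongr
  linarith [add_one_le_exp (s / r)]

lemma mul_gammaPDFReal (ha : 0 < a) (hr : r ≠ 0) (x : ℝ) :
    x * gammaPDFReal a r x = a / r * gammaPDFReal (a + 1) r x := by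
  unfold gammaPDFReal
  split_ifs with hx
  · rw [Gamma_add_one ha.ne', rpow_add_one hr, add_sub_cancel_right]
    have hxa : x * x ^ (a - 1) = x ^ a := by
      rcases hx.eq_or_lt with rfl | hx
      · rw [zero_rpow ha.ne', zero_mul]
      · rw [← rpow_one_add' hx.le (by linarith), add_sub_cancel]
    have := (Gamma_pos_of_pos ha).ne'
    rw [← hxa]
    field_simp
  · simp

lemma exp_neg_mul_mul_gammaPDFReal_sub_le {c : ℝ} (ha : 1 ≤ a) (hr : 0 ≤ r) (hc : 0 ≤ c)
    (y : ℝ) : exp (-(r * c)) * gammaPDFReal a r (y - c) ≤ gammaPDFReal a r y := by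
  have hΓ := Gamma_pos_of_pos (zero_lt_one.trans_le ha)
  unfold gammaPDFReal
  split_ifs with hyc hy hy
  · calc exp (-(r * c)) * (r ^ a / Gamma a * (y - c) ^ (a - 1) * exp (-(r * (y - c))))
        = r ^ a / Gamma a * (y - c) ^ (a - 1) * exp (-(r * y)) := by
          rw [mul_comm, mul_assoc, ← exp_add]; ring_nf
      _ ≤ r ^ a / Gamma a * y ^ (a - 1) * exp (-(r * y)) := by
          gcongr
          linarith
  · exact absurd (hc.trans (sub_nonneg.mp hyc)) hy
  · rw [mul_zero]; positivity
  · rw [mul_zero]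

lemma ofReal_le_lintegral_max_sub_gammaMeasure {c : ℝ} (ha : 1 ≤ a) (hr : 0 < r)
    (hc : 0 ≤ c) :
    ENNReal.ofReal (a / r * exp (-(r * c)))
      ≤ ∫⁻ y, ENNReal.ofReal (max (y - c) 0) ∂gammaMeasure a r := by
  have ha0 : 0 < a := by linarith
  have hpoint (y : ℝ) : a / r * exp (-(r * c)) * gammaPDFReal (a + 1) r (y - c)
      ≤ gammaPDFReal a r y * max (y - c) 0 :=
    calc a / r * exp (-(r * c)) * gammaPDFReal (a + 1) r (y - c)
        = (y - c) * (exp (-(r * c)) * gammaPDFReal a r (y - c)) := by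
          rw [mul_left_comm, mul_gammaPDFReal ha0 hr.ne']; ring
      _ ≤ max (y - c) 0 * gammaPDFReal a r y :=
          mul_le_mul (le_max_left _ _) (exp_neg_mul_mul_gammaPDFReal_sub_le ha hr.le hc y)
            (mul_nonneg (exp_pos _).le (gammaPDFReal_nonneg ha0 hr _)) (le_max_right _ _)
      _ = gammaPDFReal a r y * max (y - c) 0 := mul_comm _ _
  calc ENNReal.ofReal (a / r * exp (-(r * c)))
      = ∫⁻ y, ENNReal.ofReal (a / r * exp (-(r * c))) * gammaPDF (a + 1) r (y - c) := by
        rw [lintegral_sub_right_eq_self (fun y ↦ _ * gammaPDF (a + 1) r y) c,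
          lintegral_const_mul _ (measurable_gammaPDF _ _),
          lintegral_gammaPDF_eq_one (by linarith) hr, mul_one]
    _ ≤ ∫⁻ y, gammaPDF a r y * ENNReal.ofReal (max (y - c) 0) := by
        refine lintegral_mono fun y ↦ ?_
        rw [gammaPDF, gammaPDF, ← ENNReal.ofReal_mul (by positivity),
          ← ENNReal.ofReal_mul (gammaPDFReal_nonneg ha0 hr y)]
        exact ENNReal.ofReal_le_ofReal (hpoint y)
    _ = ∫⁻ y, ENNReal.ofReal (max (y - c) 0) ∂gammaMeasure a r :=
        (lintegral_withDensity_eq_lintegral_mul _ (measurable_gammaPDF a r) (by fun_prop)).symm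

lemma ofReal_le_lintegral_max_sub_mul_gammaMeasure_prod {b r' κ : ℝ} (ha : 1 ≤ a) (hr : 0 < r)
    (hb : 0 < b) (hr' : 0 < r') (hκ : 0 ≤ κ) :
    ENNReal.ofReal (a / r * exp (-(b * (r * κ) / r')))
      ≤ ∫⁻ q, ENNReal.ofReal (max (q.1 - κ * q.2) 0)
          ∂(gammaMeasure a r).prod (gammaMeasure b r') := by
  rw [lintegral_prod_symm _ (by fun_prop)]
  calc ENNReal.ofReal (a / r * exp (-(b * (r * κ) / r')))
      ≤ ENNReal.ofReal (a / r)
          * ∫⁻ y, ENNReal.ofReal (exp (-(r * κ * y))) ∂gammaMeasure b r' := by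
        rw [lintegral_exp_neg_mul_gammaMeasure hb hr' (by positivity),
          ← ENNReal.ofReal_mul (by positivity)]
        gcongr
        exact exp_neg_mul_div_le_div_add_rpow hb.le hr' (by positivity)
    _ = ∫⁻ y, ENNReal.ofReal (a / r * exp (-(r * (κ * y)))) ∂gammaMeasure b r' := by
        rw [← lintegral_const_mul' _ _ ENNReal.ofReal_ne_top]
        congr with y
        rw [ENNReal.ofReal_mul (by positivity), mul_assoc]
    _ ≤ ∫⁻ y, ∫⁻ x, ENNReal.ofReal (max (x - κ * y) 0)
          ∂gammaMeasure a r ∂gammaMeasure b r' := by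
        refine lintegral_mono_ae ?_
        filter_upwards [ae_nonneg_gammaMeasure b r'] with y hy
        exact ofReal_le_lintegral_max_sub_gammaMeasure ha hr (by positivity)

end ProbabilityTheory

lemma MeasureTheory.le_integral_of_ofReal_le_lintegral {α : Type*} [MeasurableSpace α]
    {μ : Measure α} {f : α → ℝ} {c : ℝ} (hf : 0 ≤ᵐ[μ] f) (hfm : AEStronglyMeasurable f μ)
    (hpos : 0 < ∫ a, f a ∂μ) (h : ENNReal.ofReal c ≤ ∫⁻ a, ENNReal.ofReal (f a) ∂μ) :
    c ≤ ∫ a, f a ∂μ := by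
  rw [integral_eq_lintegral_of_nonneg_ae hf hfm] at hpos ⊢
  exact (ENNReal.ofReal_le_iff_le_toReal (ENNReal.toReal_pos_iff.mp hpos).2.ne).mp h

theorem EDKhi_lower_bound_general (d N : ℕ) (hd : 2 ≤ d) (hN : 0 < N) (L : ℝ)
    (x : ℝ) (hx : 0 < x)
    (hinv : (1 / (d : ℝ)) *
        (∫ q : ℝ × ℝ, max (q.1 - x * q.2 / N) 0
          ∂((chiSqMeasure d).prod (chiSqMeasure N))) = Real.exp (-L)) :
    x ≥ 2 * L - 2 * Real.log d := by
  have hd' : (2 : ℝ) ≤ d := by exact_mod_cast hd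
  have hN' : (0 : ℝ) < N := by exact_mod_cast hN
  have hint : ∫ q : ℝ × ℝ, max (q.1 - x * q.2 / N) 0 ∂((chiSqMeasure d).prod (chiSqMeasure N))
      = d * exp (-L) := by
    rw [← hinv, ← mul_assoc, mul_one_div_cancel (by positivity), one_mul]
  have hbound : ENNReal.ofReal (d * exp (-(x / 2)))
      ≤ ∫⁻ q : ℝ × ℝ, ENNReal.ofReal (max (q.1 - x * q.2 / N) 0)
          ∂((chiSqMeasure d).prod (chiSqMeasure N)) := by
    unfold chiSqMeasure
    convert ofReal_le_lintegral_max_sub_mul_gammaMeasure_prod (a := d / 2) (b := N / 2)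
      (κ := x / N) (by linarith) one_half_pos (by positivity) one_half_pos (by positivity)
      using 4 with q
    · field_simp
    · field_simp
    · rw [mul_div_right_comm]
  have hle : d * exp (-(x / 2)) ≤ d * exp (-L) :=
    hint ▸ le_integral_of_ofReal_le_lintegral (ae_of_all _ fun _ ↦ le_max_right _ _)
      (by fun_prop) (hint ▸ by positivity) hbound
  have hLx : L ≤ x / 2 := by
    simpa using le_of_mul_le_mul_left hle (by positivity)
  linarith [log_nonneg (show (1 : ℝ) ≤ d by linarith)]

theorem EDKhi_lower_bound (d N : ℕ) (hd : 2 ≤ d) (hN : 0 < N) (L : ℝ) (hL : 0 ≤ L)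
    (x : ℝ) (hx : 0 < x)
    (hinv : (1 / (d : ℝ)) *
        (∫ q : ℝ × ℝ, max (q.1 - x * q.2 / N) 0
          ∂((chiSqMeasure d).prod (chiSqMeasure N))) = Real.exp (-L)) :
    x ≥ 2 * L - 2 * Real.log d :=
  EDKhi_lower_bound_general d N hd hN L x hx hinv
end
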